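/- The All-to-All Dissemination protocol 𝒜𝒟 is not grassroots: there exist ∅ ⊂ P ⊂ P' ⊆ Π such that AD(P) ⊆ AD(P')/P fails, i.e. some correct run of AD(P) is not a correct run of AD(P')/P. -/
import Mathlib

namespace GR

variable {A St St' C C' C'' : Type}

/-- A configuration over a set of agents `P`: a local state for each member of `P`. -/
abbrev Conf (A St : Type) (P : Set A) : Type := ↥P → St

/-- A transition system: correct transitions, a liveness requirement
(a set of sets of transitions), and an initial configuration. -/
structure TSys (C : Type) where
  T : Set (C × C)
  lam : Set (Set (C × C))
  c0 : C

/-- A transition of `L` is enabled on `c`. -/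
def Enabled (L : Set (C × C)) (c : C) : Prop := ∃ c', (c, c') ∈ L

/-- A run is live wrt `L` if either it has a nonempty suffix in which no transition
of `L` is enabled, or every suffix of it includes a transition of `L`. -/
def LiveWrt (L : Set (C × C)) (r : ℕ → C) : Prop :=
  (∃ n, ∀ i, n ≤ i → ¬ Enabled L (r i)) ∨ ∀ n, ∃ i, n ≤ i ∧ (r i, r (i + 1)) ∈ L

namespace TSys

/-- A run is a computation starting at the initial configuration.
(Computations are modelled as infinite sequences; a finite computation is
represented by an eventually-stuttering sequence.) -/
def RunOf (ts : TSys C) (r : ℕ → C) : Prop := r 0 = ts.c0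

/-- A computation is safe if every (non-stutter) transition of it is correct. -/
def Safe (ts : TSys C) (r : ℕ → C) : Prop :=
  ∀ i, r (i + 1) = r i ∨ (r i, r (i + 1)) ∈ ts.T

def Live (ts : TSys C) (r : ℕ → C) : Prop := ∀ L ∈ ts.lam, LiveWrt L r

/-- A run is correct if it is safe and live. -/
def CorrectRun (ts : TSys C) (r : ℕ → C) : Prop := ts.RunOf r ∧ ts.Safe r ∧ ts.Live r

/-- `t1 ⊆ t2`: every correct run of `t1` is a correct run of `t2`. -/
def Sub (t1 t2 : TSys C) : Prop := ∀ r, t1.CorrectRun r → t2.CorrectRun r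

/-- `t1 ⊂ t2`: the inclusion holds and is strict. -/
def SSub (t1 t2 : TSys C) : Prop := t1.Sub t2 ∧ ∃ r, t2.CorrectRun r ∧ ¬ t1.CorrectRun r

end TSys

/-- Existence of a safe computation (possibly empty) between configurations. -/
def Reach (ts : TSys C) : C → C → Prop :=
  Relation.ReflTransGen (fun a b => (a, b) ∈ ts.T)

/-- A `p`-transition: changes the local state of `p` and of no other agent. -/
def IsPTrans (P : Set A) (p : ↥P) (t : Conf A St P × Conf A St P) : Prop :=
  t.2 p ≠ t.1 p ∧ ∀ q : ↥P, q ≠ p → t.2 q = t.1 q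

/-- A distributed multiagent transition system over agents `P`:
correct `p`-transitions `Tp p` and liveness requirement `lamp p` for each agent. -/
structure DMTS (A St : Type) (P : Set A) where
  Tp : ↥P → Set (Conf A St P × Conf A St P)
  lamp : ↥P → Set (Set (Conf A St P × Conf A St P))

/-- The transition system (with initial local state `s0`) of a DMTS:
`T = ⋃ p, Tp p` and `λ = ⋃ p, λ_p`. -/
def DMTS.toTSys {P : Set A} (M : DMTS A St P) (s0 : St) : TSys (Conf A St P) where
  T := {t | ∃ p, t ∈ M.Tp p}
  lam := {L | ∃ p, L ∈ M.lamp p}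
  c0 := fun _ => s0

/-- Well-formedness: `Tp p` consists of `p`-transitions and `lamp p` is a partition of `Tp p`. -/
def DMTS.WF {P : Set A} (M : DMTS A St P) : Prop :=
  (∀ p, ∀ t ∈ M.Tp p, IsPTrans P p t) ∧
  (∀ p, ∀ L ∈ M.lamp p, L ⊆ M.Tp p ∧ L.Nonempty) ∧
  (∀ p, ∀ t ∈ M.Tp p, ∃! L, L ∈ M.lamp p ∧ t ∈ L)

/-- Agent `p` is safe in run `r`: every `p`-transition of `r` is a correct `p`-transition. -/
def DMTS.AgentSafe {P : Set A} (M : DMTS A St P) (p : ↥P) (r : ℕ → Conf A St P) : Prop :=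
  ∀ i, IsPTrans P p (r i, r (i + 1)) → (r i, r (i + 1)) ∈ M.Tp p

/-- Agent `p` is live in run `r`: `r` is live wrt every `L ∈ λ_p`. -/
def DMTS.AgentLive {P : Set A} (M : DMTS A St P) (p : ↥P) (r : ℕ → Conf A St P) : Prop :=
  ∀ L ∈ M.lamp p, LiveWrt L r

/-- Agent `p` is correct in run `r` if it is safe and live in `r`. -/
def DMTS.AgentCorrect {P : Set A} (M : DMTS A St P) (p : ↥P) (r : ℕ → Conf A St P) : Prop :=
  M.AgentSafe p r ∧ M.AgentLive p r

/-- Projection of a configuration over `P'` onto `P ⊆ P'`. -/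
def projC {P P' : Set A} (h : P ⊆ P') (c : Conf A St P') : Conf A St P :=
  fun p => c (Set.inclusion h p)

/-- Projection of a transition system over `P'` onto `P ⊆ P'`. -/
def TSys.proj {P P' : Set A} (h : P ⊆ P') (ts : TSys (Conf A St P')) :
    TSys (Conf A St P) where
  T := {t | ∃ t' ∈ ts.T, projC h t'.1 = t.1 ∧ projC h t'.2 = t.2}
  lam := {M | ∃ L ∈ ts.lam, M = {t | ∃ t' ∈ L, projC h t'.1 = t.1 ∧ projC h t'.2 = t.2}}
  c0 := projC h ts.c0

/-- A protocol: a family with one distributed multiagent transition system per set of agents. -/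
abbrev Protocol (A St : Type) := (P : Set A) → DMTS A St P

/-- A protocol is grassroots if `∅ ⊂ P ⊂ P' ⊆ Π` implies `TS(P) ⊂ TS(P')/P`. -/
def Grassroots (F : Protocol A St) (s0 : St) : Prop :=
  ∀ P P' : Set A, P.Nonempty → P'.Finite → ∀ h : P ⊂ P',
    TSys.SSub ((F P).toTSys s0) (TSys.proj h.subset ((F P').toTSys s0))

/-- A protocol is interactive if `TS(P')/P ⊈ TS(P)` for every `∅ ⊂ P ⊂ P' ⊆ Π`. -/
def Interactive (F : Protocol A St) (s0 : St) : Prop :=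
  ∀ P P' : Set A, P.Nonempty → P'.Finite → ∀ h : P ⊂ P',
    ¬ TSys.Sub (TSys.proj h.subset ((F P').toTSys s0)) ((F P).toTSys s0)

open Classical in
/-- Extend a configuration over `P` to one over `P' ⊇ P`, placing the
agents of `P' ∖ P` in their initial local state. -/
noncomputable def extendC (s0 : St) {P P' : Set A} (h : P ⊆ P') (c : Conf A St P) :
    Conf A St P' :=
  fun p => if hp : (p : A) ∈ P then c ⟨p, hp⟩ else s0

/-- Non-interference, safety part. -/
def NonInterferingSafety (F : Protocol A St) (s0 : St) : Prop :=
  ∀ P P' : Set A, P.Nonempty → P'.Finite → ∀ h : P ⊂ P', ∀ p : ↥P,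
    ∀ t ∈ (F P).Tp p,
      (extendC s0 h.subset t.1, extendC s0 h.subset t.2) ∈ (F P').Tp ⟨p, h.subset p.2⟩

/-- Non-interference, liveness part. -/
def NonInterferingLiveness (F : Protocol A St) (s0 : St) : Prop :=
  ∀ P P' : Set A, P.Nonempty → P'.Finite → ∀ h : P ⊂ P', ∀ p : ↥P,
    ∀ r : ℕ → Conf A St P, ((F P).toTSys s0).RunOf r → (F P).AgentLive p r →
      ∀ r' : ℕ → Conf A St P', ((F P').toTSys s0).RunOf r' →
        (∀ i, projC h.subset (r' i) = r i) →
        (F P').AgentLive ⟨p, h.subset p.2⟩ r'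

def NonInterfering (F : Protocol A St) (s0 : St) : Prop :=
  NonInterferingSafety F s0 ∧ NonInterferingLiveness F s0

/-- The order on configurations induced by the order on local states. -/
def ConfLe [LE St] {P : Set A} (c c' : Conf A St P) : Prop := ∀ p, c p ≤ c' p

def ConfLt [LE St] {P : Set A} (c c' : Conf A St P) : Prop := ConfLe c c' ∧ c ≠ c'

/-- An asynchronous DMTS: monotonic wrt `≺_S`, and enabled `p`-transitions
remain enabled when the local states of other agents increase. -/
def DMTS.Asynchronous [PartialOrder St] {P : Set A} (M : DMTS A St P) : Prop :=
  (∀ p, ∀ t ∈ M.Tp p, ConfLt t.1 t.2) ∧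
  ∀ p, ∀ t ∈ M.Tp p, ∀ d d' : Conf A St P,
    ConfLt t.1 d → IsPTrans P p (d, d') → d p = t.1 p → d' p = t.2 p →
      (d, d') ∈ M.Tp p

/-- `≺_S` is preserved under projection. -/
def PreservedUnderProjection (A St : Type) [LE St] : Prop :=
  ∀ (P P' : Set A) (h : P ⊆ P') (c1 c2 : Conf A St P'),
    ConfLe c1 c2 → ConfLe (projC h c1) (projC h c2)

/-- An asynchronous protocol. -/
def ProtocolAsynchronous [PartialOrder St] (F : Protocol A St) : Prop :=
  PreservedUnderProjection A St ∧ ∀ P : Set A, (F P).Asynchronous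

/-- A piecemeal map on local states induces a map on configurations. -/
def mapConf (σ : St → St') {P : Set A} (c : Conf A St P) : Conf A St' P :=
  fun p => σ (c p)

/-- A safe implementation maps safe runs of the implementing system to
safe runs of the specification. -/
def SafeImpl (σ : C' → C) (ts : TSys C) (ts' : TSys C') : Prop :=
  ∀ r, ts'.RunOf r → ts'.Safe r → ts.RunOf (σ ∘ r) ∧ ts.Safe (σ ∘ r)

/-- A live implementation maps live runs to live runs. -/
def LiveImpl (σ : C' → C) (ts : TSys C) (ts' : TSys C') : Prop :=
  ∀ r, ts'.RunOf r → ts'.Live r → ts.RunOf (σ ∘ r) ∧ ts.Live (σ ∘ r)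

/-- A correct implementation maps correct runs to correct runs. -/
def CorrectImpl (σ : C' → C) (ts : TSys C) (ts' : TSys C') : Prop :=
  ∀ r, ts'.CorrectRun r → ts.CorrectRun (σ ∘ r)

/-- A complete implementation: every correct run of the specification is the
image of a correct run of the implementing system. -/
def CompleteImpl (σ : C' → C) (ts : TSys C) (ts' : TSys C') : Prop :=
  ∀ r, ts.CorrectRun r → ∃ r', ts'.CorrectRun r' ∧ σ ∘ r' = r

/-- Monotonically-complete transition system wrt a partial order `le` (with
strict version `le ∧ ≠`). -/
def MonotonicallyComplete (ts : TSys C) (le : C → C → Prop) : Prop :=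
  (∀ t ∈ ts.T, le t.1 t.2 ∧ t.1 ≠ t.2) ∧
  ∀ c c', Reach ts ts.c0 c → le c c' → Reach ts c c'

/-- Productive implementation. -/
def Productive (σ : C' → C) (ts : TSys C) (ts' : TSys C') : Prop :=
  ∀ L ∈ ts.lam, ∀ r' : ℕ → C', ts'.CorrectRun r' →
    (∃ n, ∀ i, n ≤ i → ¬ Enabled L (σ (r' i))) ∨
    ∀ n, ∃ i, n ≤ i ∧ (σ (r' i), σ (r' (i + 1))) ∈ L

/-- Up condition of an order-preserving implementation. -/
def UpCondition (σ : C' → C) (leS' : C' → C' → Prop) (le : C → C → Prop) : Prop :=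
  ∀ c1' c2', leS' c1' c2' → le (σ c1') (σ c2')

/-- Down condition of an order-preserving implementation. -/
def DownCondition (σ : C' → C) (ts : TSys C) (ts' : TSys C')
    (le : C → C → Prop) (le' : C' → C' → Prop) : Prop :=
  ∀ c1 c2, Reach ts ts.c0 c1 → le c1 c2 →
    ∃ c1' c2', σ c1' = c1 ∧ σ c2' = c2 ∧ Reach ts' ts'.c0 c1' ∧ le' c1' c2'

/-- Locally safe implementation. -/
def LocallySafe (σ : C' → C) (ts : TSys C) (ts' : TSys C') : Prop :=
  ∀ c1' c2', Reach ts' ts'.c0 c1' → (c1', c2') ∈ ts'.T →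
    Reach ts ts.c0 (σ c1') ∧ Reach ts (σ c1') (σ c2')

/-- Locally complete implementation. -/
def LocallyComplete (σ : C' → C) (ts : TSys C) (ts' : TSys C') : Prop :=
  ∀ c1 c2, Reach ts ts.c0 c1 → (c1, c2) ∈ ts.T →
    ∃ c1' c2', Reach ts' ts'.c0 c1' ∧ Reach ts' c1' c2' ∧ σ c1' = c1 ∧ σ c2' = c2

/-- `(F, σ)` is a grassroots implementation of `F'`: `F` is grassroots and `σ` is a
correct and complete piecemeal implementation of each member of `F'` by
the corresponding member of `F`. -/
def IsGrassrootsImplementation (F : Protocol A St) (s0 : St)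
    (F' : Protocol A St') (s0' : St') (σ : St → St') : Prop :=
  σ s0 = s0' ∧ Grassroots F s0 ∧
  ∀ P : Set A, P.Nonempty → P.Finite →
    CorrectImpl (mapConf σ (P := P)) ((F' P).toTSys s0') ((F P).toTSys s0) ∧
    CompleteImpl (mapConf σ (P := P)) ((F' P).toTSys s0') ((F P).toTSys s0)

end GR
namespace GR

variable {A X : Type}

/-- A simple block over `P`: a triple `(p, i, x)` — an `i`-indexed simple
`p`-block with payload `x`. -/
abbrev SBlock (A X : Type) : Type := A × ℕ × X

/-- The local states of the simple-block local states function `SB`: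
sets of simple blocks. -/
abbrev SBSt (A X : Type) : Type := Set (SBlock A X)

/-- `p` follows `q` in `c` if `c_p` includes a `q`-block. -/
def SBFollows {P : Set A} (c : Conf A (SBSt A X) P) (p q : ↥P) : Prop :=
  ∃ i x, (((q : A), i, x) : SBlock A X) ∈ c p

/-- `p` and `q` are friends in `c` if they follow each other. -/
def SBFriends {P : Set A} (c : Conf A (SBSt A X) P) (p q : ↥P) : Prop :=
  SBFollows c p q ∧ SBFollows c q p

open Classical in
/-- The configuration obtained from `c` by agent `p` adding block `b` to its local state. -/
noncomputable def sbStep {P : Set A} (c : Conf A (SBSt A X) P) (p : ↥P) (b : SBlock A X) :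
    Conf A (SBSt A X) P :=
  Function.update c p (insert b (c p))

section GDAD

variable (bot : X) (XS : Set A → Set X)

/-- Grassroots Dissemination `Create`: `b = (p, i, x)` with `i` one more than the
maximal index of a `p`-block in `c_p` (so `i ≥ 1`), and `x = ⊥` if `i = 1`. -/
def GDCreateC {P : Set A} (c : Conf A (SBSt A X) P) (p : ↥P) (b : SBlock A X) : Prop :=
  ∃ i x, b = (((p : A), i, x) : SBlock A X) ∧ x ∈ XS P ∧ 1 ≤ i ∧
    (∀ j y, (((p : A), j, y) : SBlock A X) ∈ c p → j < i) ∧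
    (2 ≤ i → ∃ y, (((p : A), i - 1, y) : SBlock A X) ∈ c p) ∧
    (i = 1 → x = bot)

/-- Grassroots Dissemination `Follow`: `b = (p', 1, ⊥)` for some `p' ≠ p` in `P`. -/
def GDFollowC (P : Set A) (p : ↥P) (b : SBlock A X) : Prop :=
  ∃ p' : A, p' ∈ P ∧ p' ≠ (p : A) ∧ b = ((p', 1, bot) : SBlock A X)

/-- Grassroots Dissemination `q`-Sent-`b`: `b` is a `p'`-block known to the friend `q`,
and `p` has the preceding `p'`-block. -/
def GDSentC {P : Set A} (c : Conf A (SBSt A X) P) (p q : ↥P) (b : SBlock A X) : Prop :=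
  ∃ (p' : A) (i : ℕ) (x : X), b = ((p', i, x) : SBlock A X) ∧ p' ≠ (p : A) ∧
    b ∈ c q ∧ SBFriends c p q ∧ ∃ y, ((p', i - 1, y) : SBlock A X) ∈ c p

/-- The class of `Create` `p`-transitions of GD. -/
def GDCreateClass (P : Set A) (p : ↥P) :
    Set (Conf A (SBSt A X) P × Conf A (SBSt A X) P) :=
  {t | ∃ b, b ∉ t.1 p ∧ t.2 = sbStep t.1 p b ∧ GDCreateC bot XS t.1 p b}

/-- The class of `Follow` `p`-transitions of GD. -/
def GDFollowClass (P : Set A) (p : ↥P) :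
    Set (Conf A (SBSt A X) P × Conf A (SBSt A X) P) :=
  {t | ∃ b, b ∉ t.1 p ∧ t.2 = sbStep t.1 p b ∧ GDFollowC bot P p b}

/-- The class of `q`-Sent-`b` `p`-transitions of GD. -/
def GDSentClass (P : Set A) (p q : ↥P) (b : SBlock A X) :
    Set (Conf A (SBSt A X) P × Conf A (SBSt A X) P) :=
  {t | b ∉ t.1 p ∧ t.2 = sbStep t.1 p b ∧ GDSentC t.1 p q b}

/-- The Grassroots Dissemination transition system over `P`. -/
def GDsys (P : Set A) : DMTS A (SBSt A X) P where
  Tp p := GDCreateClass bot XS P p ∪ GDFollowClass bot P p ∪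
    {t | ∃ q b, t ∈ GDSentClass P p q b}
  lamp p := {GDCreateClass bot XS P p} ∪ {L | ∃ q b, L = GDSentClass P p q b}

/-- The Grassroots Dissemination protocol. -/
def GDProtocol : Protocol A (SBSt A X) := fun P => GDsys bot XS P

/-- All-to-All Dissemination `Create`. -/
def ADCreateC {P : Set A} (c : Conf A (SBSt A X) P) (p : ↥P) (b : SBlock A X) : Prop :=
  ∃ i x, b = (((p : A), i, x) : SBlock A X) ∧ x ∈ XS P ∧ 1 ≤ i ∧
    (∀ j y, (((p : A), j, y) : SBlock A X) ∈ c p → j < i) ∧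
    (2 ≤ i → ∃ y, (((p : A), i - 1, y) : SBlock A X) ∈ c p)

/-- All-to-All Dissemination `q`-Sent-`b`: `b ∈ c_q ∖ c_p`, with `i = 1` or `c_p`
having the preceding block. -/
def ADSentC {P : Set A} (c : Conf A (SBSt A X) P) (p q : ↥P) (b : SBlock A X) : Prop :=
  ∃ (p' : A) (i : ℕ) (x : X), b = ((p', i, x) : SBlock A X) ∧ p' ≠ (p : A) ∧
    b ∈ c q ∧ b ∉ c p ∧ (i = 1 ∨ ∃ y, ((p', i - 1, y) : SBlock A X) ∈ c p)

/-- The class of `Create` `p`-transitions of AD. -/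
def ADCreateClass (P : Set A) (p : ↥P) :
    Set (Conf A (SBSt A X) P × Conf A (SBSt A X) P) :=
  {t | ∃ b, b ∉ t.1 p ∧ t.2 = sbStep t.1 p b ∧ ADCreateC XS t.1 p b}

/-- The class of `q`-Sent-`b` `p`-transitions of AD. -/
def ADSentClass (P : Set A) (p q : ↥P) (b : SBlock A X) :
    Set (Conf A (SBSt A X) P × Conf A (SBSt A X) P) :=
  {t | b ∉ t.1 p ∧ t.2 = sbStep t.1 p b ∧ ADSentC t.1 p q b}

/-- The All-to-All Dissemination transition system over `P`. -/
def ADsys (P : Set A) : DMTS A (SBSt A X) P where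
  Tp p := ADCreateClass XS P p ∪ {t | ∃ q b, t ∈ ADSentClass P p q b}
  lamp p := {ADCreateClass XS P p} ∪ {L | ∃ q b, L = ADSentClass P p q b}

/-- The All-to-All Dissemination protocol. -/
def ADProtocol : Protocol A (SBSt A X) := fun P => ADsys XS P

end GDAD

/-- Consistency: every `p`-block appearing in any local state of `c` is in `c_p`. -/
def ConsistentSB {P : Set A} (c : Conf A (SBSt A X) P) : Prop :=
  ∀ (a : ↥P) (b : SBlock A X), (∃ q : ↥P, b ∈ c q) → b.1 = (a : A) → b ∈ c a

/-- Completeness: whenever an `i`-indexed `q`-block is in `c_p`, so is an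
`i'`-indexed `q`-block for every `1 ≤ i' < i`. -/
def CompleteSB {P : Set A} (c : Conf A (SBSt A X) P) : Prop :=
  ∀ (a : ↥P) (q : A) (i : ℕ) (x : X), ((q, i, x) : SBlock A X) ∈ c a →
    ∀ i', 1 ≤ i' → i' < i → ∃ y, ((q, i', y) : SBlock A X) ∈ c a

/-- The partial order `≺_𝒜𝒟`. -/
def leAD {P : Set A} (c c' : Conf A (SBSt A X) P) : Prop :=
  (∀ p, c p ⊆ c' p) ∧ ConsistentSB c ∧ CompleteSB c ∧ ConsistentSB c' ∧ CompleteSB c'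

/-- A relation is acyclic if it has no (nonempty) cycle. -/
def AcyclicRel {V : Type} (E : V → V → Prop) : Prop := ∀ v, ¬ Relation.TransGen E v v

/-- A dependency graph over a configuration `c` of GD: a directed graph on block
occurrences `(b, p)` (block `b` at agent `p`) such that: for each non-initial block,
the edges among its occurrences form an inverted spanning tree with the creator's
occurrence as sole sink; and each such edge `b_p → b_q` is accompanied by the edges
`b_p → (q,1,⊥)_p`, `b_p → (p,1,⊥)_q`, and `b_p → b'_p` for a preceding-index occurrence. -/
def IsDepGraphGD (bot : X) {P : Set A} (c : Conf A (SBSt A X) P)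
    (E : SBlock A X × ↥P → SBlock A X × ↥P → Prop) : Prop :=
  (∀ o o', E o o' → o.1 ∈ c o.2 ∧ o'.1 ∈ c o'.2) ∧
  (∀ b : SBlock A X, 2 ≤ b.2.1 → ∀ pc : b.1 ∈ P,
      (∀ a' : ↥P, ¬ E (b, ⟨b.1, pc⟩) (b, a')) ∧
      (∀ a : ↥P, b ∈ c a → (a : A) ≠ b.1 → ∃! a' : ↥P, E (b, a) (b, a')) ∧
      (∀ a : ↥P, b ∈ c a →
        Relation.ReflTransGen (fun u v : ↥P => E (b, u) (b, v)) a ⟨b.1, pc⟩)) ∧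
  (∀ b : SBlock A X, 2 ≤ b.2.1 → ∀ a a' : ↥P, E (b, a) (b, a') →
      E (b, a) (((((a' : A), 1, bot)) : SBlock A X), a) ∧
      E (b, a) (((((a : A), 1, bot)) : SBlock A X), a') ∧
      ∃ y : X, E (b, a) (((b.1, b.2.1 - 1, y) : SBlock A X), a))

/-- The partial order `≺_𝒢𝒟`: inclusion of consistent, complete and
dissemination-consistent configurations, with nested acyclic dependency graphs. -/
def leGD (bot : X) {P : Set A} (c c' : Conf A (SBSt A X) P) : Prop :=
  (∀ p, c p ⊆ c' p) ∧ ConsistentSB c ∧ CompleteSB c ∧ ConsistentSB c' ∧ CompleteSB c' ∧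
  ∃ E E', IsDepGraphGD bot c E ∧ AcyclicRel E ∧ IsDepGraphGD bot c' E' ∧ AcyclicRel E' ∧
    ∀ o o', E o o' → E' o o'

end GR

section ADAux

open GR Classical

variable {A X : Type}

/-- The local state after `n` creations by `a` with payload `x0`. -/
def Srun (a : A) (x0 : X) (n : ℕ) : GR.SBSt A X :=
  {β | ∃ i, 1 ≤ i ∧ i ≤ n ∧ β = (a, i, x0)}

/-- The counterexample run over `{a}`. -/
def rrun (a : A) (x0 : X) (n : ℕ) : GR.Conf A (GR.SBSt A X) ({a} : Set A) :=
  fun _ => Srun a x0 n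

/-- An extension of `rrun n` to `{a, b}` in which `b` knows the block `(b,1,x0)`. -/
noncomputable def cext (a b : A) (x0 : X) (n : ℕ) :
    GR.Conf A (GR.SBSt A X) ({a, b} : Set A) :=
  fun q => if (q : A) = a then Srun a x0 n else {(b, 1, x0)}

lemma mem_Srun {a : A} {x0 : X} {n : ℕ} {β : GR.SBlock A X} :
    β ∈ Srun a x0 n ↔ ∃ i, 1 ≤ i ∧ i ≤ n ∧ β = (a, i, x0) := Iff.rfl

lemma Srun_zero (a : A) (x0 : X) : Srun a x0 0 = (∅ : GR.SBSt A X) := by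
  ext β; simp only [mem_Srun, Set.mem_empty_iff_false, iff_false]
  rintro ⟨i, h1, h2, _⟩; omega

lemma pa_eq (a : A) (q : ↥({a} : Set A)) : q = ⟨a, rfl⟩ := Subtype.ext q.2

lemma rrun_succ (a : A) (x0 : X) (n : ℕ) :
    rrun a x0 (n + 1) =
      GR.sbStep (rrun a x0 n) ⟨a, rfl⟩ ((a, n + 1, x0) : GR.SBlock A X) := by
  funext q
  rw [pa_eq a q]
  show Srun a x0 (n + 1) = Function.update (rrun a x0 n) _ _ _
  rw [Function.update_self]
  ext β
  simp only [mem_Srun, Set.mem_insert_iff]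
  constructor
  · rintro ⟨i, h1, h2, rfl⟩
    rcases Nat.lt_or_ge i (n + 1) with h | h
    · exact Or.inr ⟨i, h1, by omega, rfl⟩
    · have : i = n + 1 := by omega
      subst this
      exact Or.inl rfl
  · rintro (rfl | ⟨i, h1, h2, rfl⟩)
    · exact ⟨n + 1, by omega, le_refl _, rfl⟩
    · exact ⟨i, h1, by omega, rfl⟩

lemma block_notMem_Srun (a : A) (x0 : X) (n : ℕ) :
    ((a, n + 1, x0) : GR.SBlock A X) ∉ Srun a x0 n := by
  rintro ⟨i, h1, h2, heq⟩
  have : n + 1 = i := congrArg (fun β : GR.SBlock A X => β.2.1) heq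
  omega

lemma b_block_notMem_Srun {a b : A} (hab : a ≠ b) (x0 : X) (n : ℕ) (i : ℕ) (y : X) :
    ((b, i, y) : GR.SBlock A X) ∉ Srun a x0 n := by
  rintro ⟨j, _, _, heq⟩
  exact hab ((congrArg Prod.fst heq).symm)

/-- The run's transitions are `Create` transitions of `AD({a})`. -/
lemma rrun_create (XS : Set A → Set X) (a : A) {x0 : X} (hx0 : x0 ∈ XS {a}) (n : ℕ) :
    (rrun a x0 n, rrun a x0 (n + 1)) ∈
      GR.ADCreateClass XS ({a} : Set A) ⟨a, rfl⟩ := by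
  refine ⟨((a, n + 1, x0) : GR.SBlock A X), block_notMem_Srun a x0 n,
    rrun_succ a x0 n, n + 1, x0, rfl, hx0, by omega, ?_, ?_⟩
  · rintro j y ⟨i, h1, h2, heq⟩
    have : j = i := congrArg (fun β : GR.SBlock A X => β.2.1) heq
    omega
  · intro h2
    exact ⟨x0, ⟨n + 1 - 1, by omega, by omega, rfl⟩⟩

/-- `rrun` is a correct run of `AD({a})`. -/
lemma rrun_correct (XS : Set A → Set X) (a : A) {x0 : X} (hx0 : x0 ∈ XS {a}) :
    ((GR.ADsys XS ({a} : Set A)).toTSys (∅ : GR.SBSt A X)).CorrectRun (rrun a x0) := by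
  refine ⟨?_, ?_, ?_⟩
  · funext q; exact Srun_zero a x0
  · intro i
    exact Or.inr ⟨⟨a, rfl⟩, Or.inl (rrun_create XS a hx0 i)⟩
  · rintro L ⟨p, hp⟩
    rw [pa_eq a p] at hp
    rcases hp with hp | ⟨q, β, rfl⟩
    · -- Create class: transitions occur in every suffix
      rw [Set.mem_singleton_iff] at hp
      subst hp
      exact Or.inr fun n => ⟨n, le_refl n, rrun_create XS a hx0 n⟩
    · -- Sent class: never enabled over a singleton set of agents
      refine Or.inl ⟨0, fun i _ hen => ?_⟩
      rcases hen with ⟨c', hnm, _, p', j, y, _, _, hmemq, hnmemp, _⟩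
      rw [pa_eq a q] at hmemq
      exact hnmemp hmemq

lemma cext_apply_eq {a b : A} (x0 : X) (n : ℕ) {q : ↥({a, b} : Set A)}
    (hq : (q : A) = a) : cext a b x0 n q = Srun a x0 n := by
  simp only [cext, if_pos hq]

lemma cext_apply_ne {a b : A} (x0 : X) (n : ℕ) {q : ↥({a, b} : Set A)}
    (hq : (q : A) ≠ a) : cext a b x0 n q = {((b, 1, x0) : GR.SBlock A X)} := by
  simp only [cext, if_neg hq]

lemma proj_cext {a b : A} (x0 : X) (h : ({a} : Set A) ⊆ {a, b}) (n : ℕ) :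
    GR.projC h (cext a b x0 n) = rrun a x0 n := by
  funext p
  show cext a b x0 n (Set.inclusion h p) = Srun a x0 n
  exact cext_apply_eq x0 n (p.2 : (p : A) = a)

/-- `AD({a}) ⊆ AD({a,b})/{a}` fails. -/
lemma AD_notSub {a b : A} (x0 : X) (XS : Set A → Set X) (hab : a ≠ b)
    (hx0 : x0 ∈ XS {a}) (h : ({a} : Set A) ⊆ {a, b}) :
    ¬ GR.TSys.Sub ((GR.ADsys XS ({a} : Set A)).toTSys (∅ : GR.SBSt A X))
        (GR.TSys.proj h ((GR.ADsys XS ({a, b} : Set A)).toTSys (∅ : GR.SBSt A X))) := by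
  intro hsub
  obtain ⟨-, -, hlive⟩ := hsub (rrun a x0) (rrun_correct XS a hx0)
  have haP' : a ∈ ({a, b} : Set A) := Or.inl rfl
  have hbP' : b ∈ ({a, b} : Set A) := Or.inr rfl
  -- the Sent class of the `b`-block `(b,1,x0)` sent by `b` to `a`
  have hL' : ({t | ∃ t' ∈ GR.ADSentClass ({a, b} : Set A) ⟨a, haP'⟩ ⟨b, hbP'⟩
        ((b, 1, x0) : GR.SBlock A X),
        GR.projC h t'.1 = t.1 ∧ GR.projC h t'.2 = t.2} :
        Set (GR.Conf A (GR.SBSt A X) ({a} : Set A) × _)) ∈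
      (GR.TSys.proj h ((GR.ADsys XS ({a, b} : Set A)).toTSys
        (∅ : GR.SBSt A X))).lam :=
    ⟨GR.ADSentClass ({a, b} : Set A) ⟨a, haP'⟩ ⟨b, hbP'⟩ ((b, 1, x0) : GR.SBlock A X),
      ⟨⟨a, haP'⟩, Or.inr ⟨⟨b, hbP'⟩, ((b, 1, x0) : GR.SBlock A X), rfl⟩⟩, rfl⟩
  have hsent : ∀ n, (cext a b x0 n,
      GR.sbStep (cext a b x0 n) ⟨a, haP'⟩ ((b, 1, x0) : GR.SBlock A X)) ∈
      GR.ADSentClass ({a, b} : Set A) ⟨a, haP'⟩ ⟨b, hbP'⟩ ((b, 1, x0) : GR.SBlock A X) := by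
    intro n
    refine ⟨?_, rfl, b, 1, x0, rfl, fun hc => hab hc.symm, ?_, ?_, Or.inl rfl⟩
    · show ((b, 1, x0) : GR.SBlock A X) ∉ cext a b x0 n ⟨a, haP'⟩
      rw [cext_apply_eq x0 n rfl]; exact b_block_notMem_Srun hab x0 n 1 x0
    · show ((b, 1, x0) : GR.SBlock A X) ∈ cext a b x0 n ⟨b, hbP'⟩
      rw [cext_apply_ne x0 n (fun hc => hab hc.symm)]; exact rfl
    · show ((b, 1, x0) : GR.SBlock A X) ∉ cext a b x0 n ⟨a, haP'⟩
      rw [cext_apply_eq x0 n rfl]; exact b_block_notMem_Srun hab x0 n 1 x0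
  rcases hlive _ hL' with ⟨n, hn⟩ | hall
  · exact hn n (le_refl n)
      ⟨_, (cext a b x0 n,
        GR.sbStep (cext a b x0 n) ⟨a, haP'⟩ ((b, 1, x0) : GR.SBlock A X)),
        hsent n, proj_cext x0 h n, rfl⟩
  · obtain ⟨i, -, hmem⟩ := hall 0
    obtain ⟨⟨c1, c2⟩, hmemL0, h1, h2⟩ := hmem
    obtain ⟨-, hc2, -⟩ := hmemL0
    have hval : c2 ⟨a, haP'⟩ = Srun a x0 (i + 1) :=
      congrFun h2 (⟨a, rfl⟩ : ↥({a} : Set A))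
    have hc2' : c2 = GR.sbStep c1 ⟨a, haP'⟩ ((b, 1, x0) : GR.SBlock A X) := hc2
    have hmemβ : ((b, 1, x0) : GR.SBlock A X) ∈ c2 ⟨a, haP'⟩ := by
      rw [hc2']
      show _ ∈ Function.update c1 _ (insert _ (c1 _)) _
      rw [Function.update_self]
      exact Set.mem_insert _ _
    rw [hval] at hmemβ
    exact b_block_notMem_Srun hab x0 (i + 1) 1 x0 hmemβ

end ADAux

/-- The All-to-All Dissemination protocol `𝒜𝒟` is not grassroots:
there exist `∅ ⊂ P ⊂ P' ⊆ Π` such that `AD(P) ⊆ AD(P')/P` fails, i.e. some correct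
run of `AD(P)` is not a correct run of `AD(P')/P`. -/
theorem AD_not_grassroots {A X : Type} (XS : Set A → Set X)
    (hA : ∃ a b : A, a ≠ b) (hXS : ∀ P : Set A, (XS P).Nonempty) :
    ¬ GR.Grassroots (GR.ADProtocol XS) (∅ : GR.SBSt A X) ∧
    ∃ (P P' : Set A) (h : P ⊂ P'), P.Nonempty ∧ P'.Finite ∧
      ¬ GR.TSys.Sub ((GR.ADsys XS P).toTSys (∅ : GR.SBSt A X))
          (GR.TSys.proj h.subset ((GR.ADsys XS P').toTSys (∅ : GR.SBSt A X))) := by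
  obtain ⟨a, b, hab⟩ := hA
  obtain ⟨x0, hx0⟩ := hXS {a}
  have hss : ({a} : Set A) ⊂ ({a, b} : Set A) :=
    ⟨fun x hx => Or.inl hx, fun hsub => hab (hsub (Or.inr rfl)).symm⟩
  have hfin : ({a, b} : Set A).Finite := (Set.finite_singleton b).insert a
  have hne : ({a} : Set A).Nonempty := ⟨a, rfl⟩
  have hnotsub := AD_notSub x0 XS hab hx0 hss.subset
  refine ⟨?_, {a}, {a, b}, hss, hne, hfin, hnotsub⟩
  intro hgr
  exact hnotsub (hgr {a} {a, b} hne hfin hss).1
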